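/- The Non-commutative Subset Convolution decomposes by cardinality: for f, g : 2^U → ℤ, (f ⋄ g)(X) = ∑_{i+j=|X|} (f_i ⋄_S g_j)(X), where f_i(A) = f(A)·[|A| = i], g_j analogously, and (p ⋄_S q)(X) = ∑_{A △ B = X} p(A)q(B)I(A,B) is the Clifford convolution over symmetric difference. -/

import Mathlib

open scoped symmDiff

/-- `I A B = (-1)^|{(a,b) ∈ A × B : a > b}|`. -/
def Isgn {n : ℕ} (A B : Finset (Fin n)) : ℤ :=
  (-1) ^ ((A ×ˢ B).filter (fun p => p.2 < p.1)).card

/-- Non-commutative Subset Convolution (over disjoint unions). -/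
def nsc {n : ℕ} (f g : Finset (Fin n) → ℤ) (X : Finset (Fin n)) : ℤ :=
  ∑ A ∈ X.powerset, f A * g (X \ A) * Isgn A (X \ A)

/-- Clifford convolution over symmetric differences: `∑_{A ∆ B = X} p(A) q(B) I(A,B)`
(the pair is parameterized by `A` since `A ∆ B = X ↔ B = A ∆ X`). -/
def cliffConv {n : ℕ} (p q : Finset (Fin n) → ℤ) (X : Finset (Fin n)) : ℤ :=
  ∑ A : Finset (Fin n), p A * q (A ∆ X) * Isgn A (A ∆ X)

/-- `f_i(A) = f(A)·[|A| = i]`. -/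
def restrictCard {n : ℕ} (f : Finset (Fin n) → ℤ) (i : ℕ) (A : Finset (Fin n)) : ℤ :=
  if A.card = i then f A else 0

/-! Summing the Clifford convolutions over `i + j = |X|` keeps exactly the terms with
`|A| + |A ∆ X| = |X|`, i.e. with `A ⊆ X`; for those `A ∆ X = X \ A`, so what remains is the
sum over disjoint decompositions `X = A ⊎ (X \ A)`. -/

open Finset

theorem Finset.card_add_card_symmDiff_eq_iff {α : Type*} [DecidableEq α] (A X : Finset α) :
    #A + #(A ∆ X) = #X ↔ A ⊆ X := by
  have hAX : #(A ∆ X) = #(A \ X) + #(X \ A) :=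
    card_union_of_disjoint disjoint_sdiff_sdiff
  have hA := card_sdiff_add_card_inter A X
  have hX := card_sdiff_add_card_inter X A
  rw [inter_comm] at hX
  have hsum : #A + #(A ∆ X) = #X + 2 * #(A \ X) := by omega
  rw [hsum, ← sdiff_eq_empty_iff_subset, ← card_eq_zero]
  omega

theorem sum_antidiagonal_restrictCard_mul {n : ℕ} (f g : Finset (Fin n) → ℤ) (m : ℕ)
    (A B : Finset (Fin n)) :
    ∑ ij ∈ antidiagonal m, restrictCard f ij.1 A * restrictCard g ij.2 B
      = if #A + #B = m then f A * g B else 0 := by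
  have hterm : ∀ ij : ℕ × ℕ, restrictCard f ij.1 A * restrictCard g ij.2 B
      = if (#A, #B) = ij then f A * g B else 0 := by
    rintro ⟨i, j⟩
    simp only [restrictCard, ite_zero_mul_ite_zero, Prod.mk.injEq]
  simp only [hterm, sum_ite_eq, HasAntidiagonal.mem_antidiagonal]

theorem nsc_eq_sum_cliffConv {n : ℕ} (f g : Finset (Fin n) → ℤ) (X : Finset (Fin n)) :
    nsc f g X
      = ∑ ij ∈ Finset.HasAntidiagonal.antidiagonal X.card,
          cliffConv (restrictCard f ij.1) (restrictCard g ij.2) X := by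
  simp only [cliffConv]
  rw [sum_comm]
  simp only [← sum_mul, sum_antidiagonal_restrictCard_mul, card_add_card_symmDiff_eq_iff,
    ite_mul, zero_mul]
  rw [← sum_filter, filter_subset_univ, nsc]
  refine sum_congr rfl fun A hA => ?_
  rw [symmDiff_of_le (mem_powerset.mp hA)]
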